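/- arXiv:2403.18763 — 2 statements merged into one kernel-verified Lean document; each statement's English description precedes it below -/
import Mathlib

section
/- For all integers r, s ≥ 0 and n ≥ 1, the product in the ring Wₙ(L) of truncated Witt vectors satisfies fil^log_r Wₙ(L) · fil^log_s Wₙ(L) ⊆ fil^log_{r+s} Wₙ(L). In particular (taking s = 0), fil^log_r Wₙ(L) is a Wₙ(O)-submodule of Wₙ(L). -/
/-!
In characteristic `p` the `i`-th component of `[c] * x` is `c ^ p ^ i * xᵢ`. Hence, writing
`φ` for the ring endomorphism of `Wₙ(L)` raising every component to the power `p ^ (n - 1)`,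
the `i`-th component of `[z ^ r] * φ x` has valuation `p ^ i * (r + p ^ (n - 1 - i) * v xᵢ)`,
so `x ∈ fil^log_r Wₙ(L)` if and only if `[z ^ r] * φ x ∈ Wₙ(O)`. Now `Wₙ(O)` is a subring of
`Wₙ(L)` stable under `φ`, and `[z ^ (r + s)] = [z ^ r] * [z ^ s]`, so all the claims follow from
`φ` being a ring homomorphism.
-/

noncomputable section

open scoped Classical

/-- A discretely valued field: a field `L` together with a normalized additive valuation
`v : L → ℤ ∪ {∞}` and a uniformizer `z` (so `v z = 1`).  The valuation ring is
`O = {a : L | 0 ≤ v a}`, with maximal ideal `𝔪 = {a : L | 1 ≤ v a}`. -/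
structure DVField (L : Type) [Field L] : Type where
  v : L → WithTop ℤ
  z : L
  v_top : ∀ a : L, v a = ⊤ ↔ a = 0
  v_mul : ∀ a b : L, v (a * b) = v a + v b
  v_add : ∀ a b : L, min (v a) (v b) ≤ v (a + b)
  v_z : v z = 1

namespace DVField

variable {L : Type} [Field L]

/-- `Wₙ(O) ⊆ Wₙ(L)`: the truncated Witt vectors all of whose components are integral. -/
def WO (D : DVField L) (p n : ℕ) : Set (TruncatedWittVector p n L) :=
  {x | ∀ i : Fin n, 0 ≤ D.v (x.coeff i)}

/-- The Brylinski–Kato filtration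
`fil^log_r Wₙ(L) = {(a₀, …, a_{n-1}) | p^{n-1-i} · v(aᵢ) ≥ -r for all i}`. -/
def filLog (D : DVField L) (p r n : ℕ) : Set (TruncatedWittVector p n L) :=
  {x | ∀ i : Fin n, (↑(-(r : ℤ)) : WithTop ℤ) ≤ p ^ (n - 1 - (i : ℕ)) • D.v (x.coeff i)}

end DVField

/-- The Verschiebung `V : Wₙ(L) → W_{n+1}(L)`, shifting components. -/
def wV {p : ℕ} {L : Type} [Field L] {n : ℕ} (x : TruncatedWittVector p n L) :
    TruncatedWittVector p (n + 1) L :=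
  TruncatedWittVector.mk p fun i =>
    if h : (i : ℕ) = 0 then 0 else x.coeff ⟨(i : ℕ) - 1, by have := i.isLt; omega⟩

/-- The iterated Verschiebung `V^{n-m} : W_m(L) → Wₙ(L)` (for `m ≤ n`), given by shifting
components by `n - m`. -/
def wVit {p : ℕ} {L : Type} [Field L] {m n : ℕ} (x : TruncatedWittVector p m L) :
    TruncatedWittVector p n L :=
  TruncatedWittVector.mk p fun i =>
    if h : n - m ≤ (i : ℕ) ∧ (i : ℕ) - (n - m) < m then x.coeff ⟨(i : ℕ) - (n - m), h.2⟩ else 0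

/-- The restriction `R : W_{n+1}(L) → Wₙ(L)`, dropping the last component. -/
def wR {p : ℕ} {L : Type} [Field L] {n : ℕ} (x : TruncatedWittVector p (n + 1) L) :
    TruncatedWittVector p n L :=
  TruncatedWittVector.mk p fun i => x.coeff i.castSucc

/-- The iterated restriction `R^{m-n} : W_m(L) → Wₙ(L)` (for `n ≤ m`), keeping the first `n`
components. -/
def wRes {p : ℕ} {L : Type} [Field L] {m n : ℕ} (x : TruncatedWittVector p m L) :
    TruncatedWittVector p n L :=
  TruncatedWittVector.mk p fun i => if h : (i : ℕ) < m then x.coeff ⟨(i : ℕ), h⟩ else 0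

/-- The Frobenius `F : W_{n+1}(L) → Wₙ(L)` in characteristic `p`:
componentwise `p`-th power followed by restriction. -/
def wF {p : ℕ} {L : Type} [Field L] {n : ℕ} (x : TruncatedWittVector p (n + 1) L) :
    TruncatedWittVector p n L :=
  TruncatedWittVector.mk p fun i => x.coeff i.castSucc ^ p

/-- The Teichmüller lift `[a] = (a, 0, …, 0)`. -/
def wT (p : ℕ) {L : Type} [Field L] (n : ℕ) (a : L) : TruncatedWittVector p n L :=
  TruncatedWittVector.mk p fun i => if (i : ℕ) = 0 then a else 0

/-- The map `p̲ : Wₙ(L) → W_{n+1}(L)`: lift to length `n+1` (by appending a zero component)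
and multiply by `p`. -/
def wP {p : ℕ} [Fact p.Prime] {L : Type} [Field L] {n : ℕ} (x : TruncatedWittVector p n L) :
    TruncatedWittVector p (n + 1) L :=
  p • (wRes x : TruncatedWittVector p (n + 1) L)

namespace DVField

variable {L : Type} [Field L]

/-- The Kato–Matsuda filtration
`fil_r Wₙ(L) = fil^log_{r-1} Wₙ(L) + V^{n-m}(fil^log_r W_m(L))` where `m = min(v_p(r), n)`,
and `fil_0 Wₙ(L) = Wₙ(O)`. -/
def filKM (D : DVField L) (p : ℕ) [Fact p.Prime] (r n : ℕ) :
    Set (TruncatedWittVector p n L) :=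
  if r = 0 then D.WO p n
  else {x | ∃ a ∈ D.filLog p (r - 1) n,
    ∃ b ∈ D.filLog p r (min (padicValNat p r) n), x = a + wVit b}

/-- The `p`-saturation `Fil^p_r Wₙ(L) = Σ_{s=0}^{n-1} p^s · fil_{r·p^s} Wₙ(L)`. -/
def FilP (D : DVField L) (p : ℕ) [Fact p.Prime] (r n : ℕ) :
    Set (TruncatedWittVector p n L) :=
  {x | ∃ f : Fin n → TruncatedWittVector p n L,
      (∀ s : Fin n, f s ∈ D.filKM p (r * p ^ (s : ℕ)) n) ∧
      x = ∑ s : Fin n, p ^ (s : ℕ) • f s}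

end DVField

namespace WittVector

variable {p : ℕ} [Fact p.Prime] {R : Type*} [CommRing R]

theorem teichmuller_add_verschiebung_coeff (a : R) (w : WittVector p R) (n : ℕ) :
    (teichmuller p a + verschiebung w).coeff n =
      (teichmuller p a).coeff n + (verschiebung w).coeff n :=
  coeff_add_of_disjoint n _ _ fun
    | 0 => .inr (verschiebung_coeff_zero w)
    | k + 1 => .inl (teichmuller_coeff_pos p a _ k.succ_pos)

theorem teichmuller_add_verschiebung_shift (x : WittVector p R) :
    teichmuller p (x.coeff 0) + verschiebung (x.shift 1) = x := by
  ext (_ | n) <;> rw [teichmuller_add_verschiebung_coeff]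
  · rw [teichmuller_coeff_zero, verschiebung_coeff_zero, add_zero]
  · rw [teichmuller_coeff_pos p _ _ n.succ_pos, verschiebung_coeff_succ, shift_coeff, zero_add,
      add_comm]

theorem frobenius_teichmuller [CharP R p] (c : R) :
    frobenius (teichmuller p c) = teichmuller p (c ^ p) := by
  rw [frobenius_eq_map_frobenius, map_teichmuller, frobenius_def]

theorem teichmuller_mul_coeff [CharP R p] (c : R) (x : WittVector p R) (n : ℕ) :
    (teichmuller p c * x).coeff n = c ^ p ^ n * x.coeff n := by
  induction n generalizing c x with
  | zero => rw [mul_coeff_zero, teichmuller_coeff_zero, pow_zero, pow_one]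
  | succ n ih =>
    have hV : teichmuller p c * verschiebung (x.shift 1) =
        verschiebung (x.shift 1 * teichmuller p (c ^ p)) := by
      rw [← frobenius_teichmuller, verschiebung_mul_frobenius, mul_comm]
    conv_lhs => rw [← teichmuller_add_verschiebung_shift x, mul_add, ← map_mul, hV]
    rw [teichmuller_add_verschiebung_coeff, teichmuller_coeff_pos p _ _ n.succ_pos, zero_add,
      verschiebung_coeff_succ, mul_comm, ih, shift_coeff, ← pow_mul, ← pow_succ', add_comm 1 n]

end WittVector

namespace TruncatedWittVector

open WittVector

variable {p n : ℕ} [Fact p.Prime] {A B : Type*} [CommRing A] [CommRing B]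

theorem mk_map_coeff_truncateFun (f : A →+* B) (X : WittVector p A) :
    (mk p fun i => f ((truncateFun n X).coeff i)) = truncateFun n (WittVector.map f X) := by
  ext i
  rw [coeff_mk, coeff_truncateFun, coeff_truncateFun, map_coeff]

variable (p n) in
def map (f : A →+* B) : TruncatedWittVector p n A →+* TruncatedWittVector p n B where
  toFun x := mk p fun i => f (x.coeff i)
  map_one' := by
    rw [← truncateFun_one, mk_map_coeff_truncateFun, map_one, truncateFun_one]
  map_mul' x y := by
    obtain ⟨X, rfl⟩ := truncateFun_surjective p n A x
    obtain ⟨Y, rfl⟩ := truncateFun_surjective p n A y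
    simp only [← truncateFun_mul, mk_map_coeff_truncateFun, map_mul]
  map_zero' := by
    rw [← truncateFun_zero, mk_map_coeff_truncateFun, map_zero, truncateFun_zero]
  map_add' x y := by
    obtain ⟨X, rfl⟩ := truncateFun_surjective p n A x
    obtain ⟨Y, rfl⟩ := truncateFun_surjective p n A y
    simp only [← truncateFun_add, mk_map_coeff_truncateFun, map_add]

@[simp]
theorem map_coeff (f : A →+* B) (x : TruncatedWittVector p n A) (i : Fin n) :
    (map p n f x).coeff i = f (x.coeff i) :=
  coeff_mk _ _

end TruncatedWittVector

theorem WithTop.nsmul_top {α : Type*} [AddMonoid α] {k : ℕ} (hk : k ≠ 0) :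
    k • (⊤ : WithTop α) = ⊤ := by
  obtain ⟨j, rfl⟩ := Nat.exists_eq_succ_of_ne_zero hk
  rw [succ_nsmul, WithTop.add_top]

theorem WithTop.neg_le_pow_sub_nsmul_iff {P i k : ℕ} (hP : 0 < P) (hik : i ≤ k) (r : ℤ)
    (w : WithTop ℤ) :
    ((-r : ℤ) : WithTop ℤ) ≤ P ^ (k - i) • w ↔ 0 ≤ P ^ i • (r : WithTop ℤ) + P ^ k • w := by
  induction w using WithTop.recTopCoe with
  | top => simp only [WithTop.nsmul_top (pow_pos hP _).ne', WithTop.add_top, le_top]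
  | coe m =>
    rw [← WithTop.coe_nsmul, ← WithTop.coe_nsmul, ← WithTop.coe_nsmul, ← WithTop.coe_add,
      ← WithTop.coe_zero, WithTop.coe_le_coe, WithTop.coe_le_coe, nsmul_eq_mul, nsmul_eq_mul,
      nsmul_eq_mul]
    have hPi : (0 : ℤ) < (P : ℤ) ^ i := pow_pos (by exact_mod_cast hP) i
    have hk : ((P : ℕ) : ℤ) ^ k = P ^ i * P ^ (k - i) := by
      rw [← pow_add, Nat.add_sub_cancel' hik]
    push_cast
    rw [hk, ← mul_le_mul_iff_right₀ hPi]
    constructor <;> intro h <;> linarith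

section Teichmuller

open WittVector

variable {p : ℕ} [Fact p.Prime] {L : Type} [Field L]

theorem wT_eq_truncateFun_teichmuller (n : ℕ) (c : L) :
    wT p n c = truncateFun n (teichmuller p c) := by
  ext i
  rw [wT, TruncatedWittVector.coeff_mk, coeff_truncateFun]
  rcases (i : ℕ).eq_zero_or_pos with h | h
  · rw [if_pos h, h, teichmuller_coeff_zero]
  · rw [if_neg h.ne', teichmuller_coeff_pos p c _ h]

theorem wT_mul_coeff [CharP L p] {n : ℕ} (c : L)
    (x : TruncatedWittVector p n L) (i : Fin n) :
    (wT p n c * x).coeff i = c ^ p ^ (i : ℕ) * x.coeff i := by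
  obtain ⟨X, rfl⟩ := truncateFun_surjective p n L x
  rw [wT_eq_truncateFun_teichmuller, ← truncateFun_mul, coeff_truncateFun, coeff_truncateFun,
    teichmuller_mul_coeff]

theorem wT_mul (n : ℕ) (a b : L) :
    wT p n (a * b) = wT p n a * wT p n b := by
  rw [wT_eq_truncateFun_teichmuller, wT_eq_truncateFun_teichmuller,
    wT_eq_truncateFun_teichmuller, map_mul, truncateFun_mul]

end Teichmuller

namespace DVField

variable {L : Type} [Field L] (D : DVField L) {p : ℕ} [Fact p.Prime]

theorem v_zero : D.v 0 = ⊤ := (D.v_top 0).mpr rfl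

theorem v_one : D.v 1 = 0 := by
  obtain ⟨m, hm⟩ := WithTop.ne_top_iff_exists.mp ((D.v_top 1).not.mpr one_ne_zero)
  have h := D.v_mul 1 1
  rw [one_mul, ← hm, ← WithTop.coe_add, WithTop.coe_inj] at h
  rw [← hm, show m = 0 by omega, WithTop.coe_zero]

def toAddValuation : AddValuation L (WithTop ℤ) :=
  AddValuation.of D.v D.v_zero D.v_one D.v_add D.v_mul

theorem v_neg (a : L) : D.v (-a) = D.v a :=
  D.toAddValuation.map_neg a

theorem v_pow (a : L) (k : ℕ) : D.v (a ^ k) = k • D.v a :=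
  D.toAddValuation.map_pow a k

def integers : Subring L where
  carrier := {a | 0 ≤ D.v a}
  one_mem' := D.v_one.ge
  mul_mem' {a b} ha hb := show 0 ≤ D.v (a * b) from D.v_mul a b ▸ add_nonneg ha hb
  zero_mem' := show 0 ≤ D.v 0 from D.v_zero ▸ le_top
  add_mem' {a b} ha hb := (le_min ha hb).trans (D.v_add a b)
  neg_mem' {a} ha := show 0 ≤ D.v (-a) from (D.v_neg a).symm ▸ ha

theorem WO_eq_range (n : ℕ) :
    D.WO p n = (TruncatedWittVector.map p n D.integers.subtype).range := by
  ext x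
  constructor
  · intro hx
    refine ⟨TruncatedWittVector.mk p fun i => ⟨x.coeff i, hx i⟩, ?_⟩
    ext i
    rw [TruncatedWittVector.map_coeff, TruncatedWittVector.coeff_mk, Subring.subtype_apply]
  · rintro ⟨y, rfl⟩ i
    rw [TruncatedWittVector.map_coeff]
    exact (y.coeff i).2

theorem map_iterateFrobenius_mem_WO [CharP L p] {n : ℕ} (k : ℕ) {a : TruncatedWittVector p n L}
    (ha : a ∈ D.WO p n) : TruncatedWittVector.map p n (iterateFrobenius L p k) a ∈ D.WO p n := by
  intro i
  rw [TruncatedWittVector.map_coeff, iterateFrobenius_def, D.v_pow]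
  exact nsmul_nonneg (ha i) _

theorem mem_filLog_iff [CharP L p] (r n : ℕ) (x : TruncatedWittVector p n L) :
    x ∈ D.filLog p r n ↔
      wT p n (D.z ^ r) * TruncatedWittVector.map p n (iterateFrobenius L p (n - 1)) x ∈
        D.WO p n := by
  refine forall_congr' fun i => ?_
  rw [wT_mul_coeff, TruncatedWittVector.map_coeff, iterateFrobenius_def, D.v_mul, D.v_pow,
    D.v_pow, D.v_pow, D.v_z, ← WithTop.coe_one, ← WithTop.coe_nsmul, nsmul_one]
  exact WithTop.neg_le_pow_sub_nsmul_iff (Fact.out : p.Prime).pos (by omega) _ _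

end DVField

theorem statement0_general (p : ℕ) [Fact p.Prime] (L : Type) [Field L] [CharP L p]
    (D : DVField L) (n : ℕ) (r s : ℕ) :
    (∀ x ∈ D.filLog p r n, ∀ y ∈ D.filLog p s n, x * y ∈ D.filLog p (r + s) n) ∧
    ((0 : TruncatedWittVector p n L) ∈ D.filLog p r n ∧
      (∀ x ∈ D.filLog p r n, ∀ y ∈ D.filLog p r n, x + y ∈ D.filLog p r n) ∧
      (∀ x ∈ D.filLog p r n, -x ∈ D.filLog p r n) ∧
      (∀ a ∈ D.WO p n, ∀ x ∈ D.filLog p r n, a * x ∈ D.filLog p r n)) := by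
  set Φ := TruncatedWittVector.map p n (iterateFrobenius L p (n - 1))
  have hΦ : ∀ a ∈ D.WO p n, Φ a ∈ D.WO p n := fun a => D.map_iterateFrobenius_mem_WO (n - 1)
  simp only [D.mem_filLog_iff, D.WO_eq_range, SetLike.mem_coe] at hΦ ⊢
  set O := (TruncatedWittVector.map p n D.integers.subtype).range
  refine ⟨fun x hx y hy => ?_, ?_, fun x hx y hy => ?_, fun x hx => ?_, fun a ha x hx => ?_⟩
  · rw [map_mul, pow_add, wT_mul, mul_mul_mul_comm]
    exact O.mul_mem hx hy
  · rw [map_zero, mul_zero]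
    exact O.zero_mem
  · rw [map_add, mul_add]
    exact O.add_mem hx hy
  · rw [map_neg, mul_neg]
    exact O.neg_mem hx
  · rw [map_mul, mul_left_comm]
    exact O.mul_mem (hΦ a ha) hx

/-- For all `r, s ≥ 0` and `n ≥ 1`, the product in `Wₙ(L)` satisfies
`fil^log_r Wₙ(L) · fil^log_s Wₙ(L) ⊆ fil^log_{r+s} Wₙ(L)`.  In particular (taking `s = 0`)
`fil^log_r Wₙ(L)` is a `Wₙ(O)`-submodule of `Wₙ(L)`. -/
theorem statement0 (p : ℕ) [Fact p.Prime] (L : Type) [Field L] [CharP L p]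
    (D : DVField L) (n : ℕ) (hn : 1 ≤ n) (r s : ℕ) :
    (∀ x ∈ D.filLog p r n, ∀ y ∈ D.filLog p s n, x * y ∈ D.filLog p (r + s) n) ∧
    ((0 : TruncatedWittVector p n L) ∈ D.filLog p r n ∧
      (∀ x ∈ D.filLog p r n, ∀ y ∈ D.filLog p r n, x + y ∈ D.filLog p r n) ∧
      (∀ x ∈ D.filLog p r n, -x ∈ D.filLog p r n) ∧
      (∀ a ∈ D.WO p n, ∀ x ∈ D.filLog p r n, a * x ∈ D.filLog p r n)) :=
  statement0_general p L D n r s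
end
end

section
/- (Divisibility of exact forms; a case in the proof of Lemma lem:dzeros in §8.) Let k be a perfect field of characteristic p, R a smooth k-algebra, r ≥ 0 an integer, and a ∈ R[t]. If the differential da ∈ Ω¹_{R[t]/k} lies in t^{pr}·Ω¹_{R[t]/k}, then there exists c ∈ R[t] such that da = d(t^{pr}·c). -/
/-!
Write `a = t^{pr} c + l` with `deg l < pr`. In characteristic `p` the form `d(t^{pr})` vanishes,
so `d(t^{pr} c) = t^{pr} dc` and `dl` is again divisible by `t^{pr}`. Both components of `dl` —
the coefficientwise differential in `Ω_{R/k}[t]` and the `dt`-coefficient `l'` — are then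
divisible by `t^{pr}` while having degree `< pr`, hence vanish, and `dl = 0` by the chain rule.
-/

open Polynomial KaehlerDifferential

theorem Derivation.map_pow_char {k A M : Type*} [CommRing k] [CommRing A] [Algebra k A]
    [AddCommGroup M] [Module A M] [Module k M] (p : ℕ) [CharP k p] (d : Derivation k A M)
    (a : A) : d (a ^ p) = 0 := by
  rw [leibniz_pow, ← Nat.cast_smul_eq_nsmul k, CharP.cast_eq_zero, zero_smul]

theorem Derivation.map_eq_smul_of_D_eq_smul {k A M : Type*} [CommRing k] [CommRing A]
    [Algebra k A] [AddCommGroup M] [Module A M] [Module k M] [IsScalarTower k A M]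
    (d : Derivation k A M) {a x : A} {w : Ω[A⁄k]} (h : D k A a = x • w) :
    d a = x • d.liftKaehlerDifferential w := by
  rw [← d.liftKaehlerDifferential_comp_D a, h, LinearMap.map_smul]

theorem PolynomialModule.coeff_X_pow_smul_of_lt {R M : Type*} [CommRing R] [AddCommGroup M]
    [Module R M] {n i : ℕ} (w : PolynomialModule R M) (hi : i < n) :
    ((X : R[X]) ^ n • w).coeff i = 0 := by
  rw [X_pow_eq_monomial, monomial_smul_apply, if_neg (by omega)]

theorem Polynomial.degree_modByMonic_X_pow_lt {R : Type*} [CommRing R] (a : R[X]) (n : ℕ) :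
    (a %ₘ X ^ n).degree < n := by
  rcases subsingleton_or_nontrivial R with _ | _
  · rw [degree_of_subsingleton]
    exact WithBot.bot_lt_coe n
  · exact (degree_modByMonic_lt a (monic_X_pow n)).trans_le (degree_X_pow_le n)

theorem KaehlerDifferential.D_eq_zero_of_degree_lt_of_eq_X_pow_smul {k R : Type*} [CommRing k]
    [CommRing R] [Algebra k R] {n : ℕ} {l : R[X]} (hl : l.degree < n) {w : Ω[R[X]⁄k]}
    (h : D k R[X] l = (X : R[X]) ^ n • w) : D k R[X] l = 0 := by
  have hcoeffs : (D k R).mapCoeffs l = 0 := by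
    have hdvd := (D k R).mapCoeffs.map_eq_smul_of_D_eq_smul h
    ext i
    rcases lt_or_ge i n with hi | hi
    · rw [hdvd, PolynomialModule.coeff_X_pow_smul_of_lt _ hi]; rfl
    · rw [Derivation.mapCoeffs_apply,
        coeff_eq_zero_of_degree_lt (hl.trans_le (by exact_mod_cast hi)), map_zero]; rfl
  have hderiv : derivative l = 0 := by
    have hdvd : (X : R[X]) ^ n ∣ derivative l :=
      ⟨_, ((derivative' (R := R)).restrictScalars k).map_eq_smul_of_D_eq_smul h⟩
    ext i
    rcases lt_or_ge i n with hi | hi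
    · exact X_pow_dvd_iff.1 hdvd i hi
    · exact coeff_eq_zero_of_degree_lt ((degree_derivative_le.trans_lt hl).trans_le
        (by exact_mod_cast hi))
  simpa [hcoeffs, hderiv] using (D k R).apply_aeval_eq' (D k R[X]) (map k k R R[X])
    (map_D k k R R[X]) X l

theorem statement16_general (p : ℕ)
    (k : Type) [Field k] [CharP k p]
    (R : Type) [CommRing R] [Algebra k R]
    (r : ℕ) (a : Polynomial R)
    (h : ∃ ω : Ω[Polynomial R⁄k], KaehlerDifferential.D k (Polynomial R) a =
        (Polynomial.X : Polynomial R) ^ (p * r) • ω) :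
    ∃ c : Polynomial R, KaehlerDifferential.D k (Polynomial R) a =
      KaehlerDifferential.D k (Polynomial R) ((Polynomial.X : Polynomial R) ^ (p * r) * c) := by
  obtain ⟨ω, hω⟩ := h
  set N : R[X] := X ^ (p * r) with hN
  have hDN : D k R[X] N = 0 := by
    rw [hN, pow_mul']
    exact (D k R[X]).map_pow_char p _
  have hD_mul (c : R[X]) : D k R[X] (N * c) = N • D k R[X] c := by
    rw [Derivation.leibniz, hDN, smul_zero, add_zero]
  have hdecomp : a %ₘ N + N * (a /ₘ N) = a := modByMonic_add_div a N
  have hrem : D k R[X] (a %ₘ N) = N • (ω - D k R[X] (a /ₘ N)) := by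
    have hD_decomp := congrArg (D k R[X]) hdecomp
    rw [map_add, hω, hD_mul] at hD_decomp
    rw [smul_sub, ← hD_decomp, add_sub_cancel_right]
  have hrem_zero : D k R[X] (a %ₘ N) = 0 :=
    D_eq_zero_of_degree_lt_of_eq_X_pow_smul (degree_modByMonic_X_pow_lt a _) hrem
  refine ⟨a /ₘ N, ?_⟩
  calc D k R[X] a = D k R[X] (a %ₘ N) + D k R[X] (N * (a /ₘ N)) := by rw [← map_add, hdecomp]
    _ = D k R[X] (N * (a /ₘ N)) := by rw [hrem_zero, zero_add]

/-- (Divisibility of exact forms.)  Let `k` be a perfect field of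
characteristic `p`, `R` a smooth `k`-algebra, `r ≥ 0` and `a ∈ R[t]`.  If
`d a ∈ t^{pr} · Ω¹_{R[t]/k}` then there exists `c ∈ R[t]` with `d a = d(t^{pr} · c)`. -/
theorem statement16 (p : ℕ) (hp : p.Prime)
    (k : Type) [Field k] [CharP k p] [PerfectField k]
    (R : Type) [CommRing R] [Algebra k R] [Algebra.Smooth k R]
    (r : ℕ) (a : Polynomial R)
    (h : ∃ ω : Ω[Polynomial R⁄k], KaehlerDifferential.D k (Polynomial R) a =
        (Polynomial.X : Polynomial R) ^ (p * r) • ω) :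
    ∃ c : Polynomial R, KaehlerDifferential.D k (Polynomial R) a =
      KaehlerDifferential.D k (Polynomial R) ((Polynomial.X : Polynomial R) ^ (p * r) * c) :=
  statement16_general p k R r a h
end
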